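/- For all n ≥ 0 and all real t with 0 < t < α_n = 4cos²(π/(n+2)) and p_n(t) > 0, there exists an integer i with 0 ≤ i < n such that p_i(t) < 0. -/

import Mathlib

open Real Finset

noncomputable def p : ℕ → ℝ → ℝ
  | 0, x => x
  | 1, x => x * (x - 1)
  | (n+2), x => x * (p (n+1) x - p n x)

/-!
Substituting `t = 4 cos² θ` turns the recurrence into that of `sin ((k + 2) θ)`:
`p k (4 cos² θ) · sin θ = (2 cos θ)^(k + 1) · sin ((k + 2) θ)`.
For `0 < t < α_n` one may take `π / (n + 2) < θ < π / 2`, so `p k t` has the sign of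
`sin ((k + 2) θ)`. Since `(n + 2) θ > π` while `sin ((n + 2) θ) > 0`, the multiples of `θ`
must jump over the interval `(π, 2π)` before reaching `(n + 2) θ`; the first multiple `m θ`
beyond `π` lands in it, and `i = m - 2` works.
-/

theorem p_four_mul_cos_sq_mul_sin (θ : ℝ) (k : ℕ) :
    p k (4 * cos θ ^ 2) * sin θ = (2 * cos θ) ^ (k + 1) * sin ((k + 2) * θ) := by
  induction k using Nat.twoStepInduction with
  | zero =>
    simp only [p, Nat.cast_zero, zero_add, sin_two_mul]
    ring
  | one =>
    rw [show ((1 : ℕ) : ℝ) + 2 = 3 by norm_num, sin_three_mul]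
    simp only [p]
    linear_combination 16 * cos θ ^ 2 * sin θ * sin_sq_add_cos_sq θ
  | more k ih₀ ih₁ =>
    have hk₀ : ((k : ℝ) + 2) * θ = (k + 3) * θ - θ := by ring
    have hk₁ : (((k + 1 : ℕ) : ℝ) + 2) * θ = (k + 3) * θ := by push_cast; ring
    have hk₂ : (((k + 2 : ℕ) : ℝ) + 2) * θ = (k + 3) * θ + θ := by push_cast; ring
    rw [hk₀, sin_sub] at ih₀
    rw [hk₁] at ih₁
    rw [hk₂, sin_add, p]
    linear_combination 4 * cos θ ^ 2 * ih₁ - 4 * cos θ ^ 2 * ih₀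

theorem sign_p_four_mul_cos_sq {θ : ℝ} (hθ₀ : 0 < θ) (hθ : θ < π / 2) (k : ℕ) :
    SignType.sign (p k (4 * cos θ ^ 2)) = SignType.sign (sin ((k + 2) * θ)) := by
  have hsin : 0 < sin θ := sin_pos_of_pos_of_lt_pi hθ₀ (by linarith [pi_pos])
  have hcos : 0 < 2 * cos θ := by
    have := cos_pos_of_mem_Ioo ⟨by linarith, hθ⟩
    positivity
  have := congrArg SignType.sign (p_four_mul_cos_sq_mul_sin θ k)
  rwa [sign_mul, sign_mul, sign_pow, sign_pos hsin, sign_pos hcos, one_pow, one_mul,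
    mul_one] at this

theorem exists_sin_nat_mul_neg {θ : ℝ} {N : ℕ} (hθ₀ : 0 < θ) (hθ : θ < π)
    (hN : π < N * θ) (hsin : 0 < sin (N * θ)) :
    ∃ m : ℕ, 2 ≤ m ∧ m < N ∧ sin (m * θ) < 0 := by
  set m := ⌊π / θ⌋₊ + 1
  have hm_gt : π < m * θ := by
    have := Nat.lt_floor_add_one (π / θ)
    rwa [div_lt_iff₀ hθ₀, ← Nat.cast_succ] at this
  have hm_le : (m : ℝ) * θ ≤ π + θ := by
    have := Nat.floor_le (div_nonneg pi_pos.le hθ₀.le)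
    rw [le_div_iff₀ hθ₀] at this
    push_cast [m]
    linarith
  have hsin_m : sin (m * θ) < 0 := by
    have := sin_pos_of_pos_of_lt_pi (sub_pos.2 hm_gt) (by linarith : m * θ - π < π)
    rwa [sin_sub_pi, neg_pos] at this
  refine ⟨m, ?_, ?_, hsin_m⟩
  · by_contra! h
    interval_cases m <;> push_cast at hm_gt <;> linarith [pi_pos]
  · have hm_le_N : m ≤ N :=
      (Nat.floor_lt (div_nonneg pi_pos.le hθ₀.le)).2 ((div_lt_iff₀ hθ₀).2 hN)
    refine hm_le_N.lt_of_ne ?_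
    rintro rfl
    linarith

theorem exists_eq_four_mul_cos_sq {t β : ℝ} (hβ₀ : 0 ≤ β) (hβ : β ≤ π / 2) (ht₀ : 0 < t)
    (ht : t < 4 * cos β ^ 2) : ∃ θ, β < θ ∧ θ < π / 2 ∧ t = 4 * cos θ ^ 2 := by
  have hcosβ : 0 ≤ cos β := cos_nonneg_of_mem_Icc ⟨by linarith [pi_pos], hβ⟩
  have hsqrt : √t / 2 < cos β := by
    have := sqrt_lt_sqrt ht₀.le (ht.trans_eq (by ring : 4 * cos β ^ 2 = (2 * cos β) ^ 2))
    rw [sqrt_sq (by positivity)] at this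
    linarith
  have hsqrt₀ : 0 < √t / 2 := by positivity
  refine ⟨arccos (√t / 2), ?_, arccos_lt_pi_div_two.2 hsqrt₀, ?_⟩
  · calc β = arccos (cos β) := (arccos_cos hβ₀ (by linarith [pi_pos])).symm
      _ < arccos (√t / 2) := arccos_lt_arccos (by linarith) hsqrt (cos_le_one β)
  · rw [cos_arccos (by linarith) (by linarith [cos_le_one β]), div_pow, sq_sqrt ht₀.le]
    ring

theorem stmt_9 (n : ℕ) (t : ℝ)
    (h0 : 0 < t) (h1 : t < 4 * Real.cos (Real.pi / ((n : ℝ) + 2)) ^ 2)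
    (h2 : p n t > 0) :
    ∃ i : ℕ, i < n ∧ p i t < 0 := by
  have hn : (0 : ℝ) < n + 2 := by positivity
  obtain ⟨θ, hβθ, hθ, rfl⟩ := exists_eq_four_mul_cos_sq (by positivity)
    (div_le_div_of_nonneg_left pi_pos.le two_pos (by linarith [n.cast_nonneg (α := ℝ)])) h0 h1
  have hθ₀ : 0 < θ := lt_trans (by positivity) hβθ
  have hπ : π < (n + 2) * θ := by rwa [div_lt_iff₀' hn] at hβθ
  have hsin : 0 < sin ((n + 2) * θ) := by
    rw [← sign_eq_one_iff, ← sign_p_four_mul_cos_sq hθ₀ hθ, sign_pos h2]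
  obtain ⟨m, hm₂, hmn, hsin_m⟩ :=
    exists_sin_nat_mul_neg (N := n + 2) hθ₀ (by linarith) (by exact_mod_cast hπ)
      (by exact_mod_cast hsin)
  refine ⟨m - 2, by omega, ?_⟩
  rw [← sign_eq_neg_one_iff, sign_p_four_mul_cos_sq hθ₀ hθ, sign_eq_neg_one_iff]
  rwa [Nat.cast_sub hm₂, Nat.cast_ofNat, sub_add_cancel]
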